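/- arXiv:2603.16754 — 12 statements merged into one kernel-verified Lean document; each statement's English description precedes it below -/
import Mathlib

section
/- There is no formula φ of interpretability logic such that for every Veltman frame F = ⟨W, R, {S_w | w ∈ W}⟩, F ⊨ φ holds if and only if F satisfies the Pencil condition, i.e. for all x, y, z, u, v ∈ W: (x R y ∧ y S_x z ∧ z R u ∧ y R v ∧ v S_x u) → y R u. -/
/-- Formulas of interpretability logic. -/
inductive ILFormula : Type where
  | atom : ℕ → ILFormula
  | falsum : ILFormula
  | impl : ILFormula → ILFormula → ILFormula
  | box : ILFormula → ILFormula
  | rhd : ILFormula → ILFormula → ILFormula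
  deriving DecidableEq

namespace ILFormula
def neg (α : ILFormula) : ILFormula := impl α falsum
def dia (α : ILFormula) : ILFormula := neg (box (neg α))
def conj (α β : ILFormula) : ILFormula := neg (impl α (neg β))
def disj (α β : ILFormula) : ILFormula := impl (neg α) β
end ILFormula

open ILFormula

/-- The Hilbert calculus IL: classical propositional logic plus K, GL, J1–J5,
    with modus ponens and necessitation. -/
inductive ILProv : ILFormula → Prop where
  | imp1 (α β) : ILProv (impl α (impl β α))
  | imp2 (α β γ) : ILProv (impl (impl α (impl β γ)) (impl (impl α β) (impl α γ)))
  | dne (α) : ILProv (impl (impl (impl α falsum) falsum) α)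
  | axK (α β) : ILProv (impl (box (impl α β)) (impl (box α) (box β)))
  | axGL (α) : ILProv (impl (box (impl (box α) α)) (box α))
  | axJ1 (α β) : ILProv (impl (box (impl α β)) (rhd α β))
  | axJ2 (α β γ) : ILProv (impl (conj (rhd α β) (rhd β γ)) (rhd α γ))
  | axJ3 (α β γ) : ILProv (impl (conj (rhd α γ) (rhd β γ)) (rhd (disj α β) γ))
  | axJ4 (α β) : ILProv (impl (rhd α β) (impl (dia α) (dia β)))
  | axJ5 (α) : ILProv (rhd (dia α) α)
  | mp {α β} : ILProv (impl α β) → ILProv α → ILProv β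
  | nec {α} : ILProv α → ILProv (box α)

/-- Derivability in IL from a finite set of hypotheses, with necessitation
    not applied to hypotheses. -/
inductive ILProvFrom (Γ : Finset ILFormula) : ILFormula → Prop where
  | hyp {φ} : φ ∈ Γ → ILProvFrom Γ φ
  | thm {φ} : ILProv φ → ILProvFrom Γ φ
  | mp {φ ψ} : ILProvFrom Γ (impl φ ψ) → ILProvFrom Γ φ → ILProvFrom Γ ψ

/-- A Veltman frame. -/
structure VeltmanFrame (W : Type*) : Type _ where
  nonempty : Nonempty W
  R : W → W → Prop
  S : W → W → W → Prop
  R_trans : ∀ {x y z}, R x y → R y z → R x z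
  R_cwf : ¬ ∃ c : ℕ → W, ∀ n, R (c n) (c (n + 1))
  S_dom : ∀ {w u v}, S w u v → R w u ∧ R w v
  S_refl : ∀ {w u}, R w u → S w u u
  S_trans : ∀ {w u v x}, S w u v → S w v x → S w u x
  R_sub_S : ∀ {w u v}, R w u → R w v → R u v → S w u v

variable {W : Type*}

def Rinv (F : VeltmanFrame W) (X : Set W) : Set W := {w | ∃ x ∈ X, F.R w x}

def Rinvhat (F : VeltmanFrame W) (Y : Set W) : Set W := {x | ∀ y, F.R x y → y ∈ Y}

def Sinv (F : VeltmanFrame W) (X Y : Set W) : Set W :=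
  {w | ∀ x ∈ X, F.R w x → ∃ y ∈ Y, F.S w x y}

/-- The algebraic interpretation of a formula in a Veltman frame under valuation `e`. -/
def interp (F : VeltmanFrame W) (e : ℕ → Set W) : ILFormula → Set W
  | .atom n => e n
  | .falsum => ∅
  | .impl α β => (interp F e α)ᶜ ∪ interp F e β
  | .box α => Rinvhat F (interp F e α)
  | .rhd α β => Sinv F (interp F e α) (interp F e β)

/-- Forcing in a Veltman model `⟨F, ev⟩`. -/
def forces (F : VeltmanFrame W) (ev : ℕ → Set W) : ILFormula → W → Prop
  | .atom n, w => w ∈ ev n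
  | .falsum, _ => False
  | .impl α β, w => forces F ev α w → forces F ev β w
  | .box α, w => ∀ v, F.R w v → forces F ev α v
  | .rhd α β, w => ∀ u, F.R w u → forces F ev α u → ∃ v, F.S w u v ∧ forces F ev β v

/-- The filter-assuring successor relation `f ≺_l g`. -/
def Assur (F : VeltmanFrame W) (l : Set (Set W)) (f g : Ultrafilter W) : Prop :=
  ∀ (A : Set W) (T : Finset (Set W)), (↑T : Set (Set W)) ⊆ l →
    Sinv F Aᶜ (⋃ S ∈ T, Sᶜ) ∈ f → A ∈ g ∧ Rinvhat F A ∈ g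

/-- A proper filter of subsets of `W`. -/
def IsProperFilter (l : Set (Set W)) : Prop :=
  l.Nonempty ∧ ∅ ∉ l ∧ (∀ A ∈ l, ∀ B : Set W, A ⊆ B → B ∈ l) ∧
    (∀ A ∈ l, ∀ B ∈ l, A ∩ B ∈ l)

/-- Worlds of the ultrafilter extension: an ultrafilter with a sequence of labels. -/
abbrev UEWorld (W : Type*) := Ultrafilter W × List (Set (Set W))

/-- The domain `W^ue` of the ultrafilter extension, generated inductively. -/
inductive InWue (F : VeltmanFrame W) : UEWorld W → Prop where
  | nil (f : Ultrafilter W) : InWue F (f, [])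
  | cons {f g : Ultrafilter W} {σ : List (Set (Set W))} {l : Set (Set W)} :
      InWue F (f, σ) → Assur F l f g → InWue F (g, σ ++ [l])

/-- The one-step relation of the ultrafilter extension. -/
def RueOne (F : VeltmanFrame W) (p q : UEWorld W) : Prop :=
  ∃ l : Set (Set W), q.2 = p.2 ++ [l] ∧ Assur F l p.1 q.1

/-- `R^ue`: the transitive closure of the one-step relation. -/
def Rue (F : VeltmanFrame W) : UEWorld W → UEWorld W → Prop :=
  Relation.TransGen (RueOne F)

/-- `S^ue_p`: the smallest reflexive transitive relation containing the
    restriction of `R^ue` to `R^ue[p]` and the one-step `S` relation. -/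
inductive Sue (F : VeltmanFrame W) (p : UEWorld W) : UEWorld W → UEWorld W → Prop where
  | refl (q) : Rue F p q → Sue F p q q
  | ofR {q r} : Rue F p q → Rue F p r → Rue F q r → Sue F p q r
  | one {q r} : Rue F p q → Rue F p r → q.2[p.2.length]? = r.2[p.2.length]? → Sue F p q r
  | trans {q r s} : Sue F p q r → Sue F p r s → Sue F p q s

/-- Forcing in the ultrafilter extension `M^ue`. -/
def ueForces (F : VeltmanFrame W) (ev : ℕ → Set W) : ILFormula → UEWorld W → Prop
  | .atom n, p => ev n ∈ p.1
  | .falsum, _ => False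
  | .impl α β, p => ueForces F ev α p → ueForces F ev β p
  | .box α, p => ∀ q : UEWorld W, InWue F q → Rue F p q → ueForces F ev α q
  | .rhd α β, p => ∀ q : UEWorld W, InWue F q → Rue F p q → ueForces F ev α q →
      ∃ r : UEWorld W, InWue F r ∧ Sue F p q r ∧ ueForces F ev β r

/-- Conjunction of a finite list of formulas (`⊤` for the empty list). -/
def conjList : List ILFormula → ILFormula
  | [] => impl falsum falsum
  | φ :: L => conj φ (conjList L)

/-- The Pencil frame condition. -/
def Pencil (F : VeltmanFrame W) : Prop :=
  ∀ x y z u v : W, F.R x y → F.S x y z → F.R z u → F.R y v → F.S x v u → F.R y u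

section PencilCounterexample

/-- Converse well-foundedness from a bounded rank function. -/
lemma cwf_of_rank {W : Type} (R : W → W → Prop) (ρ : W → ℕ) (N : ℕ)
    (hlt : ∀ a b, R a b → ρ a < ρ b) (hbd : ∀ a, ρ a ≤ N) :
    ¬ ∃ c : ℕ → W, ∀ n, R (c n) (c (n + 1)) := by
  rintro ⟨c, hc⟩
  have key : ∀ n, n ≤ ρ (c n) := by
    intro n
    induction n with
    | zero => exact Nat.zero_le _
    | succ n ih => exact Nat.lt_of_le_of_lt ih (hlt _ _ (hc n))
  have h1 := key (N + 1)
  have h2 := hbd (c (N + 1))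
  omega

/-- The relation `R` of the 6-element frame F1 (satisfying Pencil). -/
def R1 (a b : Fin 6) : Prop :=
  (a.val, b.val) ∈ [(0,1),(0,2),(0,3),(0,4),(0,5),(1,3),(2,4)]

/-- The relations `S_w` of the 6-element frame F1. -/
def S1 (w a b : Fin 6) : Prop :=
  (w.val, a.val, b.val) ∈
    [(0,1,1),(0,2,2),(0,3,3),(0,4,4),(0,5,5),
     (0,1,2),(0,1,3),(0,2,4),(0,1,4),(0,3,5),(0,1,5),
     (1,3,3),(2,4,4)]

/-- The relation `R` of the 5-element frame F2 (violating Pencil). -/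
def R2 (a b : Fin 5) : Prop :=
  (a.val, b.val) ∈ [(0,1),(0,2),(0,3),(0,4),(1,3),(2,4)]

/-- The relations `S_w` of the 5-element frame F2. -/
def S2 (w a b : Fin 5) : Prop :=
  (w.val, a.val, b.val) ∈
    [(0,1,1),(0,2,2),(0,3,3),(0,4,4),
     (0,1,2),(0,1,3),(0,1,4),(0,2,4),(0,3,4),
     (1,3,3),(2,4,4)]

instance : ∀ a b : Fin 6, Decidable (R1 a b) := fun _ _ => by unfold R1; infer_instance
instance : ∀ w a b : Fin 6, Decidable (S1 w a b) := fun _ _ _ => by unfold S1; infer_instance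
instance : ∀ a b : Fin 5, Decidable (R2 a b) := fun _ _ => by unfold R2; infer_instance
instance : ∀ w a b : Fin 5, Decidable (S2 w a b) := fun _ _ _ => by unfold S2; infer_instance

/-- The rank function for F1. -/
def rho1 (a : Fin 6) : ℕ := if a.val = 0 then 0 else if a.val = 1 ∨ a.val = 2 then 1 else 2

/-- The rank function for F2. -/
def rho2 (a : Fin 5) : ℕ := if a.val = 0 then 0 else if a.val = 1 ∨ a.val = 2 then 1 else 2

/-- The frame F1: a 6-element Veltman frame satisfying Pencil. -/
def F1 : VeltmanFrame (Fin 6) where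
  nonempty := ⟨0⟩
  R := R1
  S := S1
  R_trans := by decide
  R_cwf := cwf_of_rank R1 rho1 2 (by decide) (by decide)
  S_dom := by decide
  S_refl := by decide
  S_trans := by decide
  R_sub_S := by decide

/-- The frame F2: a 5-element Veltman frame violating Pencil. -/
def F2 : VeltmanFrame (Fin 5) where
  nonempty := ⟨0⟩
  R := R2
  S := S2
  R_trans := by decide
  R_cwf := cwf_of_rank R2 rho2 2 (by decide) (by decide)
  S_dom := by decide
  S_refl := by decide
  S_trans := by decide
  R_sub_S := by decide

/-- The bounded morphism from F1 onto F2, collapsing the two copies of `u`. -/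
def hmap (a : Fin 6) : Fin 5 := if h : a.val < 5 then ⟨a.val, h⟩ else 4

/-- A right inverse of `hmap`. -/
def gmap (q : Fin 5) : Fin 6 := ⟨q.val, by omega⟩

lemma hg : ∀ q : Fin 5, hmap (gmap q) = q := by decide

lemma Rforth : ∀ a b : Fin 6, R1 a b → R2 (hmap a) (hmap b) := by decide

lemma Rback : ∀ (a : Fin 6) (q : Fin 5), R2 (hmap a) q →
    ∃ b : Fin 6, R1 a b ∧ hmap b = q := by decide

lemma Sforth : ∀ w a b : Fin 6, S1 w a b → S2 (hmap w) (hmap a) (hmap b) := by decide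

lemma Sback : ∀ (w a : Fin 6) (q : Fin 5), R1 w a → S2 (hmap w) (hmap a) q →
    ∃ b : Fin 6, S1 w a b ∧ hmap b = q := by decide

/-- Truth transfer along the bounded morphism `hmap`. -/
lemma truth_lemma (φ : ILFormula) :
    ∀ (ev : ℕ → Set (Fin 5)) (w : Fin 6),
      forces F1 (fun n => hmap ⁻¹' ev n) φ w ↔ forces F2 ev φ (hmap w) := by
  induction φ with
  | atom n => intro ev w; exact Iff.rfl
  | falsum => intro ev w; exact Iff.rfl
  | impl α β ihα ihβ =>
      intro ev w
      exact Iff.imp (ihα ev w) (ihβ ev w)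
  | box α ih =>
      intro ev w
      constructor
      · intro h q hq
        obtain ⟨b, hb, rfl⟩ := Rback w q hq
        exact (ih ev b).mp (h b hb)
      · intro h b hb
        exact (ih ev b).mpr (h (hmap b) (Rforth w b hb))
  | rhd α β ihα ihβ =>
      intro ev w
      constructor
      · intro h q hq hαq
        obtain ⟨b, hb, rfl⟩ := Rback w q hq
        obtain ⟨c, hc, hβc⟩ := h b hb ((ihα ev b).mpr hαq)
        exact ⟨hmap c, Sforth w b c hc, (ihβ ev c).mp hβc⟩
      · intro h b hb hαb
        obtain ⟨q, hq, hβq⟩ := h (hmap b) (Rforth w b hb) ((ihα ev b).mp hαb)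
        obtain ⟨c, hc, rfl⟩ := Sback w b q hb hq
        exact ⟨c, hc, (ihβ ev c).mpr hβq⟩

lemma pencil_F1 : Pencil F1 := by
  show ∀ a b c d e : Fin 6, R1 a b → S1 a b c → R1 c d → R1 b e → S1 a e d → R1 b d
  decide

lemma not_pencil_F2 : ¬ Pencil F2 := by
  intro h
  have := h 0 1 2 4 3
  revert this
  show (R2 0 1 → S2 0 1 2 → R2 2 4 → R2 1 3 → S2 0 3 4 → R2 1 4) → False
  decide

end PencilCounterexample

/-- The class of Veltman frames satisfying the Pencil condition
    is not modally definable. -/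
theorem pencil_not_modally_definable :
    ¬ ∃ φ : ILFormula, ∀ (W : Type) (F : VeltmanFrame W),
      (∀ (ev : ℕ → Set W) (w : W), forces F ev φ w) ↔ Pencil F := by
  rintro ⟨φ, hφ⟩
  have v1 : ∀ (ev : ℕ → Set (Fin 6)) (w : Fin 6), forces F1 ev φ w :=
    (hφ (Fin 6) F1).mpr pencil_F1
  have v2 : ∀ (ev : ℕ → Set (Fin 5)) (q : Fin 5), forces F2 ev φ q := by
    intro ev q
    have := (truth_lemma φ ev (gmap q)).mp (v1 _ _)
    rwa [hg q] at this
  exact not_pencil_F2 ((hφ (Fin 5) F2).mp v2)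
end

section
/- Let F = ⟨W, R, {S_w | w ∈ W}⟩ be a Veltman frame, e a valuation on F, f an ultrafilter on W, and Γ a finite set of formulas. If Γ ⊢_IL φ (φ is derivable in IL from the hypotheses Γ, with necessitation not applied to hypotheses) and ⟦γ⟧ᵉ ∈ f for every γ ∈ Γ, then ⟦φ⟧ᵉ ∈ f. -/
open ILFormula

variable {W : Type*}

lemma mem_interp_impl {F : VeltmanFrame W} {e : ℕ → Set W} {α β : ILFormula} {w : W} :
    w ∈ interp F e (impl α β) ↔ (w ∈ interp F e α → w ∈ interp F e β) := by
  simp [interp]; tauto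

lemma mem_interp_neg {F : VeltmanFrame W} {e : ℕ → Set W} {α : ILFormula} {w : W} :
    w ∈ interp F e (neg α) ↔ w ∉ interp F e α := by
  simp [neg, mem_interp_impl, interp]

lemma mem_interp_conj {F : VeltmanFrame W} {e : ℕ → Set W} {α β : ILFormula} {w : W} :
    w ∈ interp F e (conj α β) ↔ (w ∈ interp F e α ∧ w ∈ interp F e β) := by
  simp only [conj, mem_interp_neg, mem_interp_impl]
  tauto

lemma mem_interp_disj {F : VeltmanFrame W} {e : ℕ → Set W} {α β : ILFormula} {w : W} :
    w ∈ interp F e (disj α β) ↔ (w ∈ interp F e α ∨ w ∈ interp F e β) := by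
  simp only [disj, mem_interp_neg, mem_interp_impl]
  tauto

lemma mem_interp_dia {F : VeltmanFrame W} {e : ℕ → Set W} {α : ILFormula} {w : W} :
    w ∈ interp F e (dia α) ↔ ∃ v, F.R w v ∧ v ∈ interp F e α := by
  constructor
  · intro h
    rw [dia, mem_interp_neg] at h
    by_contra hc
    push_neg at hc
    exact h (fun v hv => mem_interp_neg.2 (hc v hv))
  · rintro ⟨v, hv, hvα⟩
    rw [dia, mem_interp_neg]
    intro h
    exact mem_interp_neg.1 (h v hv) hvα

lemma flipR_wf (F : VeltmanFrame W) : WellFounded (fun a b => F.R b a) := by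
  set r : W → W → Prop := fun a b => F.R b a with hr
  by_contra h
  have hstep : ∀ a : {x : W // ¬Acc r x}, ∃ b : {x : W // ¬Acc r x}, F.R a.1 b.1 := by
    rintro ⟨a, ha⟩
    by_contra hb
    push_neg at hb
    refine ha (Acc.intro a fun y hy => ?_)
    by_contra hy'
    exact hb ⟨y, hy'⟩ hy
  have h0 : ∃ a : W, ¬Acc r a := by
    by_contra h'
    push_neg at h'
    exact h ⟨h'⟩
  obtain ⟨a0, ha0⟩ := h0
  choose g hg using hstep
  apply F.R_cwf
  refine ⟨fun n => (g^[n] ⟨a0, ha0⟩).1, fun n => ?_⟩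
  show F.R (g^[n] ⟨a0, ha0⟩).1 (g^[n+1] ⟨a0, ha0⟩).1
  rw [Function.iterate_succ_apply' g n]
  exact hg _

lemma interp_of_ILProv {F : VeltmanFrame W} {e : ℕ → Set W} {φ : ILFormula}
    (h : ILProv φ) : ∀ w, w ∈ interp F e φ := by
  induction h with
  | imp1 α β => intro w; simp only [mem_interp_impl]; tauto
  | imp2 α β γ => intro w; simp only [mem_interp_impl]; tauto
  | dne α =>
      intro w; simp only [mem_interp_impl]
      intro h
      by_contra hc
      have := h (fun hα => (hc hα).elim)
      simp [interp] at this
  | axK α β =>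
      intro w; simp only [mem_interp_impl]
      intro h1 h2 v hv
      exact mem_interp_impl.1 (h1 v hv) (h2 v hv)
  | axGL α =>
      intro w; simp only [mem_interp_impl]
      intro h
      intro v hv
      induction v using WellFounded.induction (flipR_wf F) with
      | _ v ih =>
        exact mem_interp_impl.1 (h v hv) (fun u hu => ih u hu (F.R_trans hv hu))
  | axJ1 α β =>
      intro w; simp only [mem_interp_impl]
      intro h x hx hRx
      exact ⟨x, mem_interp_impl.1 (h x hRx) hx, F.S_refl hRx⟩
  | axJ2 α β γ =>
      intro w; simp only [mem_interp_impl]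
      intro h x hx hRx
      obtain ⟨h1, h2⟩ := mem_interp_conj.1 h
      obtain ⟨y, hy, hSy⟩ := h1 x hx hRx
      obtain ⟨z, hz, hSz⟩ := h2 y hy (F.S_dom hSy).2
      exact ⟨z, hz, F.S_trans hSy hSz⟩
  | axJ3 α β γ =>
      intro w; simp only [mem_interp_impl]
      intro h x hx hRx
      obtain ⟨h1, h2⟩ := mem_interp_conj.1 h
      rcases mem_interp_disj.1 hx with hα | hβ
      · exact h1 x hα hRx
      · exact h2 x hβ hRx
  | axJ4 α β =>
      intro w; simp only [mem_interp_impl]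
      intro h hd
      obtain ⟨v, hv, hvα⟩ := mem_interp_dia.1 hd
      obtain ⟨y, hy, hSy⟩ := h v hvα hv
      exact mem_interp_dia.2 ⟨y, (F.S_dom hSy).2, hy⟩
  | axJ5 α =>
      intro w x hx hRx
      obtain ⟨u, hu, huα⟩ := mem_interp_dia.1 hx
      exact ⟨u, huα, F.R_sub_S hRx (F.R_trans hRx hu) hu⟩
  | mp h1 h2 ih1 ih2 => intro w; exact mem_interp_impl.1 (ih1 w) (ih2 w)
  | nec h ih => intro w v _; exact ih v

/-- If Γ ⊢_IL φ and ⟦γ⟧ᵉ ∈ f for every γ ∈ Γ, then ⟦φ⟧ᵉ ∈ f. -/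
theorem interp_mem_ultrafilter_of_ILProvFrom {W : Type*} (F : VeltmanFrame W)
    (e : ℕ → Set W) (f : Ultrafilter W) (Γ : Finset ILFormula) (φ : ILFormula)
    (h : ILProvFrom Γ φ) (hΓ : ∀ γ ∈ Γ, interp F e γ ∈ f) :
    interp F e φ ∈ f := by
  induction h with
  | hyp hφ => exact hΓ _ hφ
  | thm hp =>
      rw [← Ultrafilter.mem_coe]
      exact Filter.mem_of_superset Filter.univ_mem (fun w _ => interp_of_ILProv hp w)
  | mp h1 h2 ih1 ih2 =>
      rw [← Ultrafilter.mem_coe] at ih1 ih2 ⊢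
      exact Filter.mem_of_superset (Filter.inter_mem ih1 ih2)
        (fun w hw => mem_interp_impl.1 hw.1 hw.2)
end

section
/- Let F = ⟨W, R, {S_w | w ∈ W}⟩ be a Veltman frame, f, g, h ultrafilters on W, and l, m collections of subsets of W. If f ≺_l g and g ≺_m h, then f ≺_l h. -/
open ILFormula

variable {W : Type*}

/-- If f ≺_l g and g ≺_m h, then f ≺_l h. -/
theorem assur_trans {W : Type*} (F : VeltmanFrame W)
    (f g h : Ultrafilter W) (l m : Set (Set W))
    (hfg : Assur F l f g) (hgh : Assur F m g h) :
    Assur F l f h := by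
  intro A T hT hS
  obtain ⟨hAg, hRg⟩ := hfg A T hT hS
  have key : Sinv F Aᶜ (⋃ S ∈ (∅ : Finset (Set W)), Sᶜ) = Rinvhat F A := by
    ext w
    simp [Sinv, Rinvhat]
    constructor
    · intro hw y hy
      by_contra hA
      exact hw y hA hy
    · intro hw y hy hR
      exact hy (hw y hR)
  exact hgh A ∅ (by simp) (by rw [key]; exact hRg)
end

section
/- Let F = ⟨W, R, {S_w | w ∈ W}⟩ be a Veltman frame, f an ultrafilter on W, and l a proper filter of subsets of W. Define B_f := {A ⊆ W | there exist finitely many S_1, …, S_n ∈ l with S⁻¹(W ∖ A, ⋃_i (W ∖ S_i)) ∈ f}. If C ∈ B_f, then R̂⁻¹(C) ∈ B_f. -/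
open ILFormula

variable {W : Type*}

/-- B_f is closed under R̂⁻¹. -/
theorem Bf_closed_under_rinvhat {W : Type*} (F : VeltmanFrame W)
    (f : Ultrafilter W) (l : Set (Set W)) (hl : IsProperFilter l) (C : Set W)
    (hC : C ∈ {A : Set W | ∃ T : Finset (Set W),
        (↑T : Set (Set W)) ⊆ l ∧ Sinv F Aᶜ (⋃ S ∈ T, Sᶜ) ∈ f}) :
    Rinvhat F C ∈ {A : Set W | ∃ T : Finset (Set W),
        (↑T : Set (Set W)) ⊆ l ∧ Sinv F Aᶜ (⋃ S ∈ T, Sᶜ) ∈ f} := by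
  obtain ⟨T, hT, hf⟩ := hC
  refine ⟨T, hT, Filter.mem_of_superset hf ?_⟩
  intro w hw x hx hwx
  simp only [Set.mem_compl_iff, Rinvhat, Set.mem_setOf_eq, not_forall] at hx
  obtain ⟨x', hxx', hx'C⟩ := hx
  obtain ⟨y, hy, hsy⟩ := hw x' hx'C (F.R_trans hwx hxx')
  exact ⟨y, hy, F.S_trans (F.R_sub_S hwx (F.R_trans hwx hxx') hxx') hsy⟩
end

section
/- Let F = ⟨W, R, {S_w | w ∈ W}⟩ be a Veltman frame, f an ultrafilter on W, and l a proper filter of subsets of W. Then the set B_f := {A ⊆ W | there exist finitely many S_1, …, S_n ∈ l with S⁻¹(W ∖ A, ⋃_i (W ∖ S_i)) ∈ f} is closed under binary intersections: if C, D ∈ B_f then C ∩ D ∈ B_f. -/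
open ILFormula

variable {W : Type*}

/-- B_f is closed under binary intersections. -/
theorem Bf_closed_under_inter {W : Type*} (F : VeltmanFrame W)
    (f : Ultrafilter W) (l : Set (Set W)) (hl : IsProperFilter l) (C D : Set W)
    (hC : C ∈ {A : Set W | ∃ T : Finset (Set W),
        (↑T : Set (Set W)) ⊆ l ∧ Sinv F Aᶜ (⋃ S ∈ T, Sᶜ) ∈ f})
    (hD : D ∈ {A : Set W | ∃ T : Finset (Set W),
        (↑T : Set (Set W)) ⊆ l ∧ Sinv F Aᶜ (⋃ S ∈ T, Sᶜ) ∈ f}) :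
    C ∩ D ∈ {A : Set W | ∃ T : Finset (Set W),
        (↑T : Set (Set W)) ⊆ l ∧ Sinv F Aᶜ (⋃ S ∈ T, Sᶜ) ∈ f} := by
  classical
  obtain ⟨TC, hTC, hfC⟩ := hC
  obtain ⟨TD, hTD, hfD⟩ := hD
  refine ⟨TC ∪ TD, ?_, ?_⟩
  · intro S hS
    rcases Finset.mem_union.mp hS with h | h
    · exact hTC h
    · exact hTD h
  · refine f.toFilter.mem_of_superset (f.toFilter.inter_mem hfC hfD) ?_
    rintro w ⟨hwC, hwD⟩ x hx hRx
    rcases not_and_or.mp hx with hx | hx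
    · obtain ⟨y, hy, hSy⟩ := hwC x hx hRx
      refine ⟨y, ?_, hSy⟩
      simp only [Set.mem_iUnion] at hy ⊢
      obtain ⟨S, hS, hyS⟩ := hy
      exact ⟨S, Finset.mem_union_left _ hS, hyS⟩
    · obtain ⟨y, hy, hSy⟩ := hwD x hx hRx
      refine ⟨y, ?_, hSy⟩
      simp only [Set.mem_iUnion] at hy ⊢
      obtain ⟨S, hS, hyS⟩ := hy
      exact ⟨S, Finset.mem_union_right _ hS, hyS⟩
end

section
/- Let F = ⟨W, R, {S_w | w ∈ W}⟩ be a Veltman frame, f, g, h ultrafilters on W, and a, b collections of subsets of W. Then: (1) if a ⊆ b and f ≺_b g, then f ≺_a g; (2) if f ≺_a g and for every X ∈ h we have R⁻¹(X) ∈ g, then f ≺_a h. -/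
open ILFormula

variable {W : Type*}

/-- restriction and propagation for the assuring relation. -/
theorem assur_restriction_propagation {W : Type*} (F : VeltmanFrame W)
    (f g h : Ultrafilter W) (a b : Set (Set W)) :
    (a ⊆ b → Assur F b f g → Assur F a f g) ∧
    (Assur F a f g → (∀ X : Set W, X ∈ h → Rinv F X ∈ g) → Assur F a f h) := by
  constructor
  · intro hab hb A T hT hS
    exact hb A T (hT.trans hab) hS
  · intro hfg hgh A T hT hS
    obtain ⟨hAg, hRA⟩ := hfg A T hT hS
    have key : ∀ B : Set W, Rinv F B ∈ g → ∃ x ∈ B, ∃ w, F.R w x ∧ Rinvhat F A w := by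
      intro B hB
      have hne : (Rinv F B ∩ Rinvhat F A) ∈ g := g.toFilter.inter_sets hB hRA
      have : (Rinv F B ∩ Rinvhat F A).Nonempty := by
        rcases g.toFilter.nonempty_of_mem hne with ⟨w, hw1, hw2⟩
        exact ⟨w, hw1, hw2⟩
      rcases this with ⟨w, ⟨x, hxB, hwx⟩, hw2⟩
      exact ⟨x, hxB, w, hwx, hw2⟩
    constructor
    · by_contra hA
      have : Aᶜ ∈ h := Ultrafilter.compl_mem_iff_notMem.2 hA
      rcases key Aᶜ (hgh _ this) with ⟨x, hx, w, hwx, hw⟩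
      exact hx (hw x hwx)
    · by_contra hA
      have : (Rinvhat F A)ᶜ ∈ h := Ultrafilter.compl_mem_iff_notMem.2 hA
      rcases key _ (hgh _ this) with ⟨x, hx, w, hwx, hw⟩
      rcases not_forall.1 hx with ⟨y, hy⟩
      rcases Classical.not_imp.1 hy with ⟨hxy, hyA⟩
      exact hyA (hw y (F.R_trans hwx hxy))
end

section
/- Let F = ⟨W, R, {S_w | w ∈ W}⟩ be a Veltman frame, f, g ultrafilters on W, a a collection of subsets of W, and y ⊆ W. Then: (1) if f ≺_a g and x ⊆ y for some x ∈ a, then f ≺_{a ∪ {y}} g; (2) if f ≺_a g, then f ≺_{a ∪ R̂⁻¹(a)} g, where R̂⁻¹(a) := {R̂⁻¹(S) | S ∈ a}. -/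
open ILFormula

variable {W : Type*}

/-- label extension closure properties. -/
theorem assur_label_extension {W : Type*} (F : VeltmanFrame W)
    (f g : Ultrafilter W) (a : Set (Set W)) (y : Set W) :
    (Assur F a f g → (∃ x ∈ a, x ⊆ y) → Assur F (a ∪ {y}) f g) ∧
    (Assur F a f g → Assur F (a ∪ (Rinvhat F '' a)) f g) := by
  constructor
  · rintro hA ⟨x, hxa, hxy⟩ A T hT hf
    classical
    refine hA A (insert x (T.erase y)) ?_ ?_
    · intro S hS
      simp only [Finset.coe_insert, Set.mem_insert_iff] at hS
      rcases hS with rfl | hS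
      · exact hxa
      · rcases Finset.mem_erase.1 hS with ⟨hne, hST⟩
        rcases hT hST with h | h
        · exact h
        · exact absurd h hne
    · refine Filter.mem_of_superset hf ?_
      intro w hw u hu hru
      rcases hw u hu hru with ⟨v, hv, hSwuv⟩
      simp only [Set.mem_iUnion] at hv
      rcases hv with ⟨S, hST, hvS⟩
      by_cases hSy : S = y
      · refine ⟨v, ?_, hSwuv⟩
        simp only [Set.mem_iUnion]
        exact ⟨x, Finset.mem_insert_self _ _, fun hvx => hvS (hSy ▸ hxy hvx)⟩
      · refine ⟨v, ?_, hSwuv⟩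
        simp only [Set.mem_iUnion]
        exact ⟨S, Finset.mem_insert_of_mem (Finset.mem_erase.2 ⟨hSy, hST⟩), hvS⟩
  · rintro hA A T hT hf
    classical
    have hchoice : ∀ S ∈ T, ∃ B ∈ a, S = B ∨ S = Rinvhat F B := by
      intro S hS
      rcases hT hS with h | ⟨B, hBa, rfl⟩
      · exact ⟨S, h, Or.inl rfl⟩
      · exact ⟨B, hBa, Or.inr rfl⟩
    choose φ hφa hφ using hchoice
    refine hA A (T.attach.image fun S => φ S.1 S.2) ?_ ?_
    · intro B hB
      simp only [Finset.coe_image, Set.mem_image] at hB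
      rcases hB with ⟨⟨S, hS⟩, _, rfl⟩
      exact hφa S hS
    · refine Filter.mem_of_superset hf ?_
      intro w hw u hu hru
      rcases hw u hu hru with ⟨v, hv, hSwuv⟩
      simp only [Set.mem_iUnion] at hv
      rcases hv with ⟨S, hST, hvS⟩
      have hmem : φ S hST ∈ T.attach.image fun S => φ S.1 S.2 :=
        Finset.mem_image.2 ⟨⟨S, hST⟩, Finset.mem_attach _ _, rfl⟩
      rcases hφ S hST with h | h
      · refine ⟨v, ?_, hSwuv⟩
        simp only [Set.mem_iUnion]
        exact ⟨φ S hST, hmem, h ▸ hvS⟩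
      · have hv' : v ∉ Rinvhat F (φ S hST) := h ▸ hvS
        simp only [Rinvhat, Set.mem_setOf_eq, not_forall] at hv'
        rcases hv' with ⟨z, hvz, hz⟩
        have hwv : F.R w v := (F.S_dom hSwuv).2
        have hwz : F.R w z := F.R_trans hwv hvz
        have hSvz : F.S w v z := F.R_sub_S hwv hwz hvz
        refine ⟨z, ?_, F.S_trans hSwuv hSvz⟩
        simp only [Set.mem_iUnion]
        exact ⟨φ S hST, hmem, hz⟩
end

section
/- Let F = ⟨W, R, {S_w | w ∈ W}⟩ be a Veltman frame, f, g ultrafilters on W, and a a collection of nonempty subsets of W with the finite intersection property. Let l(a) := {S ⊆ W | there exist S_1, …, S_n ∈ a with S_1 ∩ … ∩ S_n ⊆ S} be the filter generated by a. If f ≺_a g, then f ≺_{l(a)} g. -/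
open ILFormula

variable {W : Type*}

/-- the assuring relation extends from a FIP family to the
    filter it generates. -/
theorem assur_generated_filter {W : Type*} (F : VeltmanFrame W)
    (f g : Ultrafilter W) (a : Set (Set W))
    (hne : ∀ A ∈ a, A.Nonempty)
    (hfip : ∀ T : Finset (Set W), (↑T : Set (Set W)) ⊆ a → (⋂ S ∈ T, S).Nonempty)
    (h : Assur F a f g) :
    Assur F {S : Set W | ∃ T : Finset (Set W), T.Nonempty ∧
        (↑T : Set (Set W)) ⊆ a ∧ (⋂ S' ∈ T, S') ⊆ S} f g := by
  classical
  intro A T hTsub hf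
  -- for each S ∈ T choose a finite family from a
  choose TS hTSne hTSa hTSsub using fun S (hS : S ∈ T) => hTsub hS
  set T' : Finset (Set W) := T.attach.biUnion (fun S => TS S.1 S.2) with hT'
  have hT'a : (↑T' : Set (Set W)) ⊆ a := by
    intro x hx
    simp only [hT', Finset.coe_biUnion, Set.mem_iUnion] at hx
    obtain ⟨S, _, hxS⟩ := hx
    exact hTSa S.1 S.2 hxS
  have hmono : Sinv F Aᶜ (⋃ S ∈ T, Sᶜ) ⊆ Sinv F Aᶜ (⋃ S ∈ T', Sᶜ) := by
    intro w hw x hx hRx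
    obtain ⟨y, hy, hS⟩ := hw x hx hRx
    refine ⟨y, ?_, hS⟩
    simp only [Set.mem_iUnion] at hy ⊢
    obtain ⟨S, hST, hyS⟩ := hy
    have hyi : y ∉ ⋂ S' ∈ TS S hST, S' := fun hmem => hyS (hTSsub S hST hmem)
    simp only [Set.mem_iInter, not_forall] at hyi
    obtain ⟨S', hS', hyS'⟩ := hyi
    refine ⟨S', ?_, hyS'⟩
    simp only [hT', Finset.mem_biUnion, Finset.mem_attach, true_and]
    exact ⟨⟨S, hST⟩, hS'⟩
  exact h A T' hT'a (f.toFilter.sets_of_superset hf hmono)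
end

section
/- Let F = ⟨W, R, {S_w | w ∈ W}⟩ be a Veltman frame, f, g ultrafilters on W, l a collection of subsets of W, and A, B ⊆ W. If f ≺_l g, S⁻¹(A, B) ∈ f, and A ∈ g, then there exists an ultrafilter h on W with f ≺_l h and B ∈ h. -/
open ILFormula

variable {W : Type*}

/-
The sets `C` with `S⁻¹(Cᶜ, ⋃ᵢ Sᵢᶜ) ∈ f` for finitely many `Sᵢ ∈ l` form a filter, and `f ≺_l h`
says exactly that `h` contains `C ∩ R̂⁻¹(C)` for each of them. As `C ↦ C ∩ R̂⁻¹(C)` is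
monotone, it suffices to see that no `C ∩ R̂⁻¹(C) ∩ B` is empty. Were one empty, every
`S_w`-step from `A` into `B` could be prolonged inside the frame into `⋃ᵢ Sᵢᶜ`; then
`S⁻¹(A, ⋃ᵢ Sᵢᶜ) ∈ f`, and `f ≺_l g` would put `Aᶜ` into `g`.
-/

namespace VeltmanFrame

variable (F : VeltmanFrame W)

lemma Sinv_anti_left {X X' : Set W} (hX : X' ⊆ X) (Y : Set W) : Sinv F X Y ⊆ Sinv F X' Y :=
  fun _ hw x hx hR => hw x (hX hx) hR

lemma Sinv_empty_left (Y : Set W) : Sinv F ∅ Y = Set.univ :=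
  Set.eq_univ_of_forall fun _ _ hx => hx.elim

lemma Sinv_inter_Sinv_subset (X X' Y Y' : Set W) :
    Sinv F X Y ∩ Sinv F X' Y' ⊆ Sinv F (X ∪ X') (Y ∪ Y') := by
  rintro w ⟨hw, hw'⟩ x (hx | hx) hR
  · obtain ⟨y, hy, hS⟩ := hw x hx hR
    exact ⟨y, Or.inl hy, hS⟩
  · obtain ⟨y, hy, hS⟩ := hw' x hx hR
    exact ⟨y, Or.inr hy, hS⟩

lemma Rinvhat_mono {Y Y' : Set W} (h : Y ⊆ Y') : Rinvhat F Y ⊆ Rinvhat F Y' :=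
  fun _ hx y hR => h (hx y hR)

lemma monotone_inter_Rinvhat : Monotone fun C : Set W => C ∩ Rinvhat F C :=
  fun _ _ h => Set.inter_subset_inter h (F.Rinvhat_mono h)

/-- The `S_w`-successor `y ∈ B` of `x` lies in `C ∩ R̂⁻¹(C)`, or outside `C`, or in `C` with an
`R`-successor `z ∉ C`, and then `R_sub_S` gives `y S_w z`. -/
lemma Sinv_inter_Sinv_compl_subset (A B C Y : Set W) :
    Sinv F A B ∩ Sinv F Cᶜ Y ⊆ Sinv F A (B ∩ (C ∩ Rinvhat F C) ∪ Y) := by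
  rintro w ⟨hAB, hCY⟩ x hxA hwx
  obtain ⟨y, hyB, hxy⟩ := hAB x hxA hwx
  have hwy : F.R w y := (F.S_dom hxy).2
  by_cases hyC : y ∈ C
  · by_cases hyRC : y ∈ Rinvhat F C
    · exact ⟨y, Or.inl ⟨hyB, hyC, hyRC⟩, hxy⟩
    · obtain ⟨z, hyz, hzC⟩ : ∃ z, F.R y z ∧ z ∉ C := by
        simpa [Rinvhat] using hyRC
      have hwz : F.R w z := F.R_trans hwy hyz
      obtain ⟨u, huY, hzu⟩ := hCY z hzC hwz
      exact ⟨u, Or.inr huY, F.S_trans (F.S_trans hxy (F.R_sub_S hwy hwz hyz)) hzu⟩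
  · obtain ⟨u, huY, hyu⟩ := hCY y hyC hwy
    exact ⟨u, Or.inr huY, F.S_trans hxy hyu⟩

def assuredFilter (l : Set (Set W)) (f : Filter W) : Filter W where
  sets := {C | ∃ T : Finset (Set W), (↑T : Set (Set W)) ⊆ l ∧ Sinv F Cᶜ (⋃ S ∈ T, Sᶜ) ∈ f}
  univ_sets := ⟨∅, by simp, by simp [Sinv_empty_left]⟩
  sets_of_superset := by
    rintro C D ⟨T, hT, hC⟩ hCD
    exact ⟨T, hT, Filter.mem_of_superset hC
      (F.Sinv_anti_left (Set.compl_subset_compl.mpr hCD) _)⟩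
  inter_sets := by
    classical
    rintro C D ⟨T, hT, hC⟩ ⟨T', hT', hD⟩
    refine ⟨T ∪ T', by simpa using And.intro hT hT', ?_⟩
    rw [Set.compl_inter, Finset.set_biUnion_union]
    exact Filter.mem_of_superset (Filter.inter_mem hC hD) (F.Sinv_inter_Sinv_subset _ _ _ _)

lemma assur_iff_le_lift' {l : Set (Set W)} {f g : Ultrafilter W} :
    Assur F l f g ↔ (g : Filter W) ≤ (F.assuredFilter l f).lift' fun C => C ∩ Rinvhat F C := by
  rw [Filter.le_lift']
  constructor
  · rintro hfg C ⟨T, hT, hC⟩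
    exact Filter.inter_mem (hfg C T hT hC).1 (hfg C T hT hC).2
  · intro hg C T hT hC
    exact Filter.inter_mem_iff.mp (hg C ⟨T, hT, hC⟩)

lemma inter_Rinvhat_inter_nonempty {l : Set (Set W)} {f g : Ultrafilter W} {A B : Set W}
    (hfg : Assur F l f g) (hS : Sinv F A B ∈ f) (hA : A ∈ g) {C : Set W}
    (hC : C ∈ F.assuredFilter l f) : (C ∩ Rinvhat F C ∩ B).Nonempty := by
  obtain ⟨T, hT, hCf⟩ := hC
  by_contra hempty
  have hBC : B ∩ (C ∩ Rinvhat F C) = ∅ := by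
    rw [Set.inter_comm]
    exact Set.not_nonempty_iff_eq_empty.mp hempty
  have hAT : Sinv F Aᶜᶜ (⋃ S ∈ T, Sᶜ) ∈ f := by
    have := F.Sinv_inter_Sinv_compl_subset A B C (⋃ S ∈ T, Sᶜ)
    rw [hBC, Set.empty_union] at this
    rw [compl_compl]
    exact Filter.mem_of_superset (Filter.inter_mem hS hCf) this
  exact Ultrafilter.compl_notMem_iff.mpr hA (hfg Aᶜ T hT hAT).1

end VeltmanFrame

/-- existence of an assuring successor containing B. -/
theorem exists_assur_successor {W : Type*} (F : VeltmanFrame W)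
    (f g : Ultrafilter W) (l : Set (Set W)) (A B : Set W)
    (hfg : Assur F l f g) (hS : Sinv F A B ∈ f) (hA : A ∈ g) :
    ∃ h : Ultrafilter W, Assur F l f h ∧ B ∈ h := by
  set 𝓑 := (F.assuredFilter l f).lift' fun C => C ∩ Rinvhat F C
  have : (𝓑 ⊓ Filter.principal B).NeBot := by
    refine Filter.inf_principal_neBot_iff.mpr fun U hU => ?_
    obtain ⟨C, hC, hCU⟩ := (Filter.mem_lift'_sets F.monotone_inter_Rinvhat).mp hU
    exact (F.inter_Rinvhat_inter_nonempty hfg hS hA hC).mono (Set.inter_subset_inter_left B hCU)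
  obtain ⟨h, hle⟩ := Ultrafilter.exists_le (𝓑 ⊓ Filter.principal B)
  rw [le_inf_iff, Filter.le_principal_iff] at hle
  exact ⟨h, F.assur_iff_le_lift'.mpr hle.1, hle.2⟩
end

section
/- Let F = ⟨W, R, {S_w | w ∈ W}⟩ be a Veltman frame, f an ultrafilter on W, and A, B ⊆ W. If W ∖ S⁻¹(A, B) ∈ f, then there exist an ultrafilter g on W and a proper filter l of subsets of W such that A ∈ g, W ∖ B ∈ l, and f ≺_l g. -/
open ILFormula

variable {W : Type*}

private lemma Sinv_mono_right {W : Type*} (F : VeltmanFrame W) {X Y Y' : Set W}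
    (hYY' : Y ⊆ Y') : Sinv F X Y ⊆ Sinv F X Y' := by
  intro w hw x hx hR
  obtain ⟨y, hy, hS⟩ := hw x hx hR
  exact ⟨y, hYY' hy, hS⟩

private lemma Sinv_iUnion₂ {W : Type*} (F : VeltmanFrame W) {ι : Type*} (s : Set ι)
    (U : ι → Set W) (Y : Set W) :
    Sinv F (⋃ i ∈ s, U i) Y = ⋂ i ∈ s, Sinv F (U i) Y := by
  ext w
  simp only [Sinv, Set.mem_setOf_eq, Set.mem_iUnion, Set.mem_iInter]
  constructor
  · intro hw i hi x hx hR
    exact hw x ⟨i, hi, hx⟩ hR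
  · rintro hw x ⟨i, hi, hx⟩ hR
    exact hw i hi x hx hR

/-- from (S⁻¹(A,B))ᶜ ∈ f one finds an assuring successor g
    with A ∈ g and a proper filter l with Bᶜ ∈ l. -/
theorem exists_assur_successor_of_compl {W : Type*} (F : VeltmanFrame W)
    (f : Ultrafilter W) (A B : Set W) (h : (Sinv F A B)ᶜ ∈ f) :
    ∃ (g : Ultrafilter W) (l : Set (Set W)),
      IsProperFilter l ∧ A ∈ g ∧ Bᶜ ∈ l ∧ Assur F l f g := by
  classical
  -- Bᶜ is nonempty
  have hBc : Bᶜ.Nonempty := by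
    by_contra hne
    rw [Set.not_nonempty_iff_eq_empty, Set.compl_empty_iff] at hne
    subst hne
    have huniv : Sinv F A Set.univ = Set.univ := by
      ext w
      simp only [Sinv, Set.mem_setOf_eq, Set.mem_univ, iff_true]
      intro x hx hR
      exact ⟨x, trivial, F.S_refl hR⟩
    rw [huniv, Set.compl_univ] at h
    exact f.toFilter.empty_notMem h
  set D : Set (Set W) := {C | Sinv F Cᶜ B ∈ f} with hD
  -- key lemma
  have key : ∀ C ∈ D, (A ∩ (C ∩ Rinvhat F C)).Nonempty := by
    intro C hC
    have hmem : (Sinv F A B)ᶜ ∩ Sinv F Cᶜ B ∈ f := Filter.inter_mem h hC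
    obtain ⟨w, hw1, hw2⟩ := Ultrafilter.nonempty_of_mem hmem
    simp only [Set.mem_compl_iff, Sinv, Set.mem_setOf_eq] at hw1
    push_neg at hw1
    obtain ⟨x, hxA, hwRx, hx⟩ := hw1
    have hxC : x ∈ C := by
      by_contra hxC
      obtain ⟨y, hyB, hSy⟩ := hw2 x hxC hwRx
      exact hx y hyB hSy
    refine ⟨x, hxA, hxC, ?_⟩
    intro z hxz
    by_contra hzC
    obtain ⟨y, hyB, hSy⟩ := hw2 z hzC (F.R_trans hwRx hxz)
    have hSxz : F.S w x z := F.R_sub_S hwRx (F.R_trans hwRx hxz) hxz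
    exact hx y hyB (F.S_trans hSxz hSy)
  set G₀ : Set (Set W) := insert A ((fun C => C ∩ Rinvhat F C) '' D) with hG₀
  -- finite intersection property
  have hfip : ∀ t ⊆ G₀, t.Finite → (⋂₀ t).Nonempty := by
    intro t hts htfin
    set t' := t \ {A} with ht'
    have ht'fin : t'.Finite := htfin.subset Set.diff_subset
    have ht'rep : ∀ X ∈ t', ∃ C, C ∈ D ∧ X = C ∩ Rinvhat F C := by
      intro X hX
      rcases hts hX.1 with h1 | ⟨C, hC, hCX⟩
      · exact absurd h1 hX.2
      · exact ⟨C, hC, hCX.symm⟩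
    choose! rep hrepD hrepX using ht'rep
    set C : Set W := ⋂ X ∈ t', rep X with hC
    have hCcompl : Cᶜ = ⋃ X ∈ t', (rep X)ᶜ := by
      simp [hC, Set.compl_iInter]
    have hCD : C ∈ D := by
      show Sinv F Cᶜ B ∈ f
      rw [hCcompl, Sinv_iUnion₂]
      exact (Filter.biInter_mem ht'fin).mpr (fun X hX => hrepD X hX)
    obtain ⟨x, hxA, hxC, hxR⟩ := key C hCD
    refine ⟨x, ?_⟩
    intro X hX
    by_cases hXA : X = A
    · subst hXA; exact hxA
    · have hXt' : X ∈ t' := ⟨hX, hXA⟩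
      rw [hrepX X hXt']
      have hsub : C ⊆ rep X := Set.biInter_subset_of_mem hXt'
      refine ⟨hsub hxC, ?_⟩
      intro y hy
      exact hsub (hxR y hy)
  have hne : (Filter.generate G₀).NeBot := Filter.generate_neBot_iff.mpr hfip
  let g : Ultrafilter W := @Ultrafilter.of W (Filter.generate G₀) hne
  have hg : ∀ X ∈ G₀, X ∈ g := fun X hX =>
    (@Ultrafilter.of_le W (Filter.generate G₀) hne) (Filter.mem_generate_of_mem hX)
  refine ⟨g, {X | Bᶜ ⊆ X}, ?_, hg A (Set.mem_insert _ _), fun _ hx => hx, ?_⟩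
  · refine ⟨⟨Bᶜ, fun _ hx => hx⟩, ?_, ?_, ?_⟩
    · intro hcon
      exact absurd (Set.subset_empty_iff.mp hcon) (Set.nonempty_iff_ne_empty.mp hBc)
    · intro X hX Y hXY
      exact hX.trans hXY
    · intro X hX Y hY
      exact Set.subset_inter hX hY
  · intro A' T hTl hS
    have hsub : (⋃ S ∈ T, Sᶜ) ⊆ B := by
      intro y hy
      simp only [Set.mem_iUnion, exists_prop] at hy
      obtain ⟨S, hST, hyS⟩ := hy
      have hBS : Bᶜ ⊆ S := hTl hST
      by_contra hyB
      exact hyS (hBS hyB)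
    have hA'D : A' ∈ D :=
      Filter.mem_of_superset hS (Sinv_mono_right F hsub)
    have hmem : A' ∩ Rinvhat F A' ∈ g :=
      hg _ (Set.mem_insert_of_mem _ ⟨A', hA'D, rfl⟩)
    exact ⟨Filter.mem_of_superset hmem Set.inter_subset_left,
           Filter.mem_of_superset hmem Set.inter_subset_right⟩
end

section
/- For any Veltman model M = ⟨F, ev⟩, the ultrafilter extension M^ue is modally saturated: for every ⟨f, σ⟩ ∈ W^ue and every set Σ of formulas such that M^ue, ⟨f, σ⟩ ⊩ ◇(⋀Σ') for every finite Σ' ⊆ Σ, there exists ⟨g, τ⟩ ∈ W^ue with ⟨f, σ⟩ R^ue ⟨g, τ⟩ and M^ue, ⟨g, τ⟩ ⊩ ψ for every ψ ∈ Σ. -/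
open ILFormula

variable {W : Type*}

/-! On worlds of `W^ue`, forcing `φ` at `(f, σ)` is the same as `⟦φ⟧ ∈ f`. For the `□` and `▷`
clauses one needs successors: an ultrafilter `g` with `f ≺_l g` refining a filter `H` exists as
soon as `H` meets every set that `f ≺_l` forces into all its successors. For `▷` the label is
what controls `S^ue`: refuting `α ▷ β` uses the label `{⟦β⟧ᶜ}`, which keeps `⟦β⟧` out of every
world reachable through it, while verifying it reuses the label already on the path to the
`α`-world. Saturation is then one more successor, with the empty label and `H` the filter
generated by `⟦Σ⟧`: the hypothesis says that `f` contains `R⁻¹(X)` for every `X ∈ H`. -/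

open Set Filter

variable {F : VeltmanFrame W}

section SetOperators

lemma sinv_subset_sinv {X X' Y Y' : Set W} (hX : X' ⊆ X) (hY : Y ⊆ Y') :
    Sinv F X Y ⊆ Sinv F X' Y' := fun _ hw x hx hwx =>
  let ⟨y, hy, hxy⟩ := hw x (hX hx) hwx
  ⟨y, hY hy, hxy⟩

lemma sinv_self (X : Set W) : Sinv F X X = univ :=
  eq_univ_of_forall fun _ x hx hwx => ⟨x, hx, F.S_refl hwx⟩

lemma sinv_inter_subset_sinv_union (X X' Y : Set W) :
    Sinv F X Y ∩ Sinv F X' Y ⊆ Sinv F (X ∪ X') Y := by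
  rintro w ⟨hX, hX'⟩ x (hx | hx) hwx
  exacts [hX x hx hwx, hX' x hx hwx]

lemma sinv_inter_subset_sinv_trans (X Y Z : Set W) :
    Sinv F X Y ∩ Sinv F Y Z ⊆ Sinv F X Z := by
  rintro w ⟨hXY, hYZ⟩ x hx hwx
  obtain ⟨y, hy, hxy⟩ := hXY x hx hwx
  obtain ⟨z, hz, hyz⟩ := hYZ y hy (F.S_dom hxy).2
  exact ⟨z, hz, F.S_trans hxy hyz⟩

lemma sinv_compl_subset_sinv_compl_rinvhat (A Y : Set W) :
    Sinv F Aᶜ Y ⊆ Sinv F (Rinvhat F A)ᶜ Y := by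
  intro w hw x hx hwx
  obtain ⟨z, hxz, hz⟩ : ∃ z, F.R x z ∧ z ∉ A := by simpa [Rinvhat] using hx
  have hwz := F.R_trans hwx hxz
  obtain ⟨y, hy, hzy⟩ := hw z hz hwz
  exact ⟨y, hy, F.S_trans (F.R_sub_S hwx hwz hxz) hzy⟩

lemma sinv_compl_empty (A : Set W) : Sinv F Aᶜ ∅ = Rinvhat F A := by
  ext w
  simp only [Sinv, Rinvhat, mem_ofPred_eq, mem_compl_iff, mem_empty_iff_false, false_and,
    exists_false, imp_false]
  exact forall_congr' fun x => by tauto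

lemma compl_rinvhat_compl (X : Set W) : (Rinvhat F Xᶜ)ᶜ = Rinv F X := by
  ext w
  simp [Rinvhat, Rinv, and_comm]

lemma rinv_mono {X Y : Set W} (h : X ⊆ Y) : Rinv F X ⊆ Rinv F Y :=
  fun _ ⟨x, hx, hwx⟩ => ⟨x, h hx, hwx⟩

end SetOperators

section AssuredFilter

/-- The sets `A` that `f ≺_l g` puts into every `g`; `Assur F l f g` says exactly that `g`
refines this filter. -/
def assuredFilter (F : VeltmanFrame W) (l : Set (Set W)) (f : Ultrafilter W) : Filter W where
  sets := {A | ∃ T : Finset (Set W), ↑T ⊆ l ∧ Sinv F Aᶜ (⋃ S ∈ T, Sᶜ) ∈ f}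
  univ_sets := ⟨∅, by simp, by simp [Sinv]; exact univ_mem⟩
  sets_of_superset := by
    rintro A B ⟨T, hT, hA⟩ hAB
    exact ⟨T, hT, mem_of_superset hA (sinv_subset_sinv (compl_subset_compl.2 hAB) subset_rfl)⟩
  inter_sets := by
    classical
    rintro A B ⟨T, hT, hA⟩ ⟨T', hT', hB⟩
    refine ⟨T ∪ T', by simpa using union_subset hT hT', mem_of_superset (inter_mem hA hB) ?_⟩
    rw [compl_inter, Finset.set_biUnion_union]
    exact (inter_subset_inter (sinv_subset_sinv subset_rfl subset_union_left)
      (sinv_subset_sinv subset_rfl subset_union_right)).trans (sinv_inter_subset_sinv_union _ _ _)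

variable {l : Set (Set W)} {f g : Ultrafilter W} {A : Set W}

lemma mem_assuredFilter_of_rinvhat_mem (hA : Rinvhat F A ∈ f) : A ∈ assuredFilter F l f :=
  ⟨∅, by simp, by simpa [sinv_compl_empty] using hA⟩

lemma mem_assuredFilter_empty_iff : A ∈ assuredFilter F ∅ f ↔ Rinvhat F A ∈ f := by
  refine ⟨fun ⟨T, hT, hA⟩ => ?_, mem_assuredFilter_of_rinvhat_mem⟩
  obtain rfl : T = ∅ := by simpa using hT
  simpa [sinv_compl_empty] using hA

lemma mem_assuredFilter_singleton_compl_iff {Y : Set W} :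
    A ∈ assuredFilter F {Yᶜ} f ↔ Sinv F Aᶜ Y ∈ f := by
  refine ⟨fun ⟨T, hT, hA⟩ => mem_of_superset hA (sinv_subset_sinv subset_rfl ?_),
    fun hA => ⟨{Yᶜ}, by simp, by simpa using hA⟩⟩
  intro y
  simp only [mem_iUnion, mem_compl_iff, exists_prop]
  rintro ⟨S, hS, hyS⟩
  rw [hT (Finset.mem_coe.2 hS), mem_compl_iff, not_not] at hyS
  exact hyS

lemma rinvhat_mem_assuredFilter (hA : A ∈ assuredFilter F l f) :
    Rinvhat F A ∈ assuredFilter F l f :=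
  let ⟨T, hT, hA⟩ := hA
  ⟨T, hT, mem_of_superset hA (sinv_compl_subset_sinv_compl_rinvhat _ _)⟩

lemma inter_compl_mem_assuredFilter {X Y : Set W} (hXY : Sinv F X Y ∈ f)
    (hA : A ∈ assuredFilter F l f) (hAY : Disjoint A Y) : A ∩ Xᶜ ∈ assuredFilter F l f := by
  obtain ⟨T, hT, hA⟩ := hA
  refine ⟨T, hT, mem_of_superset (inter_mem hA (inter_mem hXY hA)) ?_⟩
  rw [compl_inter, compl_compl]
  refine inter_subset_inter_right _ ?_ |>.trans (sinv_inter_subset_sinv_union _ _ _)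
  exact (inter_subset_inter_right _ (sinv_subset_sinv hAY.subset_compl_left subset_rfl)).trans
    (sinv_inter_subset_sinv_trans _ _ _)

lemma Assur.mem (h : Assur F l f g) (hA : A ∈ assuredFilter F l f) :
    A ∈ g ∧ Rinvhat F A ∈ g :=
  let ⟨T, hT, hA⟩ := hA
  h A T hT hA

lemma exists_assur_le {H : Filter W} (h : (assuredFilter F l f ⊓ H).NeBot) :
    ∃ g : Ultrafilter W, Assur F l f g ∧ ↑g ≤ H := by
  obtain ⟨g, hg⟩ := Ultrafilter.exists_le (assuredFilter F l f ⊓ H)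
  have hgA := hg.trans inf_le_left
  exact ⟨g, fun A T hT hA => ⟨hgA ⟨T, hT, hA⟩, hgA (rinvhat_mem_assuredFilter ⟨T, hT, hA⟩)⟩,
    hg.trans inf_le_right⟩

end AssuredFilter

section UltrafilterExtension

variable {p q r : UEWorld W}

lemma Rue.exists_append (h : Rue F p q) : ∃ s ≠ [], q.2 = p.2 ++ s := by
  induction h with
  | single h => obtain ⟨l, hl, -⟩ := h; exact ⟨[l], by simp, hl⟩
  | tail _ h ih =>
    obtain ⟨l, hl, -⟩ := h
    obtain ⟨s, -, hs⟩ := ih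
    exact ⟨s ++ [l], by simp, by rw [hl, hs, List.append_assoc]⟩

lemma Rue.rinvhat_mem {A : Set W} (h : Rue F p q) (hA : Rinvhat F A ∈ p.1) :
    A ∈ q.1 ∧ Rinvhat F A ∈ q.1 := by
  induction h with
  | single h => obtain ⟨l, -, hl⟩ := h; exact hl.mem (mem_assuredFilter_of_rinvhat_mem hA)
  | tail _ h ih => obtain ⟨l, -, hl⟩ := h; exact hl.mem (mem_assuredFilter_of_rinvhat_mem ih.2)

lemma Rue.exists_label (h : Rue F p q) :
    ∃ l, q.2[p.2.length]? = some l ∧ ∀ A ∈ assuredFilter F l p.1, A ∈ q.1 := by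
  obtain ⟨c, ⟨l, hc, hpc⟩, hcq⟩ := Relation.TransGen.head'_iff.1 h
  rcases Relation.reflTransGen_iff_eq_or_transGen.1 hcq with rfl | hcq
  · exact ⟨l, by rw [hc, List.getElem?_concat_length], fun A hA => (hpc.mem hA).1⟩
  · obtain ⟨s, -, hs⟩ := Rue.exists_append hcq
    refine ⟨l, ?_, fun A hA => (Rue.rinvhat_mem hcq (hpc.mem hA).2).1⟩
    rw [hs, hc, List.append_assoc, List.getElem?_append_right le_rfl]
    simp

lemma Sue.rue_and_label_eq (h : Sue F p q r) :
    Rue F p r ∧ q.2[p.2.length]? = r.2[p.2.length]? := by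
  induction h with
  | refl q h => exact ⟨h, rfl⟩
  | ofR hpq hpr hqr =>
    obtain ⟨s, -, hs⟩ := hqr.exists_append
    obtain ⟨s', hs', hs''⟩ := hpq.exists_append
    refine ⟨hpr, ?_⟩
    rw [hs, List.getElem?_append_left]
    simpa [hs''] using List.length_pos_iff.2 hs'
  | one _ hpr e => exact ⟨hpr, e⟩
  | trans _ _ ih₁ ih₂ => exact ⟨ih₂.1, ih₁.2.trans ih₂.2⟩

end UltrafilterExtension

section Truth

variable {p : UEWorld W}

lemma exists_rue_le_of_rinv_mem (hp : InWue F p) {H : Filter W}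
    (hH : ∀ X ∈ H, Rinv F X ∈ p.1) : ∃ q, InWue F q ∧ Rue F p q ∧ ↑q.1 ≤ H := by
  have hne : (assuredFilter F ∅ p.1 ⊓ H).NeBot := inf_neBot_iff.2 fun A hA X hX => by
    obtain ⟨w, ⟨x, hx, hwx⟩, hwA⟩ :=
      Filter.nonempty_of_mem (inter_mem (hH X hX) (mem_assuredFilter_empty_iff.1 hA))
    exact ⟨x, hwA x hwx, hx⟩
  obtain ⟨g, hg, hgH⟩ := exists_assur_le hne
  exact ⟨(g, p.2 ++ [∅]), hp.cons hg, .single ⟨∅, rfl, hg⟩, hgH⟩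

lemma forall_rue_iff_rinvhat_mem {P : UEWorld W → Prop} {X : Set W}
    (hP : ∀ q, InWue F q → (P q ↔ X ∈ q.1)) (hp : InWue F p) :
    (∀ q, InWue F q → Rue F p q → P q) ↔ Rinvhat F X ∈ p.1 := by
  refine ⟨fun h => by_contra fun hX => ?_, fun hX q hq hpq => (hP q hq).2 (hpq.rinvhat_mem hX).1⟩
  have hXc : Rinv F Xᶜ ∈ p.1 := by
    rw [← compl_rinvhat_compl, compl_compl]
    exact Ultrafilter.compl_mem_iff_notMem.2 hX
  obtain ⟨q, hq, hpq, hqX⟩ :=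
    exists_rue_le_of_rinv_mem (H := 𝓟 Xᶜ) hp fun Y hY => mem_of_superset hXc (rinv_mono hY)
  exact Ultrafilter.compl_mem_iff_notMem.1 (hqX (mem_principal_self _)) ((hP q hq).1 (h q hq hpq))

lemma forall_rue_exists_sue_iff_sinv_mem {P Q : UEWorld W → Prop} {X Y : Set W}
    (hP : ∀ q, InWue F q → (P q ↔ X ∈ q.1)) (hQ : ∀ q, InWue F q → (Q q ↔ Y ∈ q.1))
    (hp : InWue F p) :
    (∀ q, InWue F q → Rue F p q → P q → ∃ r, InWue F r ∧ Sue F p q r ∧ Q r) ↔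
      Sinv F X Y ∈ p.1 := by
  constructor
  · intro h
    by_contra hXY
    have hne : (assuredFilter F {Yᶜ} p.1 ⊓ 𝓟 X).NeBot := inf_principal_neBot_iff.2 fun A hA => by
      by_contra hAX
      have hXA : X ⊆ Aᶜ :=
        (disjoint_iff_inter_eq_empty.2 (not_nonempty_iff_eq_empty.1 hAX)).subset_compl_left
      exact hXY (mem_of_superset (mem_assuredFilter_singleton_compl_iff.1 hA)
        (sinv_subset_sinv hXA subset_rfl))
    obtain ⟨g, hg, hgX⟩ := exists_assur_le hne
    obtain ⟨r, hr, hqr, hQr⟩ := h _ (hp.cons hg) (.single ⟨_, rfl, hg⟩)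
      ((hP _ (hp.cons hg)).2 (hgX (mem_principal_self X)))
    obtain ⟨hpr, hlabel⟩ := hqr.rue_and_label_eq
    obtain ⟨l, hl, hrl⟩ := hpr.exists_label
    rw [List.getElem?_concat_length, hl, Option.some_inj] at hlabel
    subst hlabel
    have hYc : Yᶜ ∈ r.1 := hrl _ 
      (mem_assuredFilter_singleton_compl_iff.2 (by rw [compl_compl, sinv_self]; exact univ_mem))
    exact Ultrafilter.compl_mem_iff_notMem.1 hYc ((hQ r hr).1 hQr)
  · intro hXY q hq hpq hPq
    obtain ⟨l, hl, hql⟩ := hpq.exists_label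
    have hne : (assuredFilter F l p.1 ⊓ 𝓟 Y).NeBot := inf_principal_neBot_iff.2 fun A hA => by
      by_contra hAY
      have hAX := hql _ (inter_compl_mem_assuredFilter hXY hA
        (disjoint_iff_inter_eq_empty.2 (not_nonempty_iff_eq_empty.1 hAY)))
      exact Ultrafilter.compl_mem_iff_notMem.1 (mem_of_superset hAX inter_subset_right)
        ((hP q hq).1 hPq)
    obtain ⟨g, hg, hgY⟩ := exists_assur_le hne
    exact ⟨_, hp.cons hg, .one hpq (.single ⟨l, rfl, hg⟩) (by rw [hl, List.getElem?_concat_length]),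
      (hQ _ (hp.cons hg)).2 (hgY (mem_principal_self Y))⟩

theorem ueForces_iff_mem_interp (ev : ℕ → Set W) :
    ∀ (φ : ILFormula) (p : UEWorld W), InWue F p → (ueForces F ev φ p ↔ interp F ev φ ∈ p.1)
  | .atom _, _, _ => Iff.rfl
  | .falsum, _, _ => iff_of_false id Ultrafilter.empty_notMem
  | .impl α β, p, hp => by
    rw [ueForces, interp, ueForces_iff_mem_interp ev α p hp, ueForces_iff_mem_interp ev β p hp,
      Ultrafilter.union_mem_iff, Ultrafilter.compl_mem_iff_notMem, imp_iff_not_or]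
  | .box α, _, hp => forall_rue_iff_rinvhat_mem (ueForces_iff_mem_interp ev α) hp
  | .rhd α β, _, hp => forall_rue_exists_sue_iff_sinv_mem (ueForces_iff_mem_interp ev α)
      (ueForces_iff_mem_interp ev β) hp

end Truth

section Saturation

variable (F) (ev : ℕ → Set W)

lemma interp_dia (α : ILFormula) : interp F ev (dia α) = Rinv F (interp F ev α) := by
  simp [dia, neg, interp, compl_rinvhat_compl]

lemma interp_conjList_append (L L' : List ILFormula) :
    interp F ev (conjList (L ++ L')) = interp F ev (conjList L) ∩ interp F ev (conjList L') := by
  induction L with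
  | nil => simp [conjList, interp]
  | cons φ L ih => simp [conjList, conj, neg, interp, ih, inter_assoc]

def conjFilter (Sig : Set ILFormula) : Filter W where
  sets := {B | ∃ L : List ILFormula, (∀ ψ ∈ L, ψ ∈ Sig) ∧ interp F ev (conjList L) ⊆ B}
  univ_sets := ⟨[], by simp, subset_univ _⟩
  sets_of_superset := fun ⟨L, hL, hLB⟩ hBB' => ⟨L, hL, hLB.trans hBB'⟩
  inter_sets := fun ⟨L, hL, hLB⟩ ⟨L', hL', hLB'⟩ =>
    ⟨L ++ L', by simpa [or_imp, forall_and] using And.intro hL hL',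
      by rw [interp_conjList_append]; exact inter_subset_inter hLB hLB'⟩

lemma interp_mem_conjFilter {Sig : Set ILFormula} {ψ : ILFormula} (hψ : ψ ∈ Sig) :
    interp F ev ψ ∈ conjFilter F ev Sig :=
  ⟨[ψ], by simpa using hψ, by simp [conjList, conj, neg, interp]⟩

end Saturation

/-- the ultrafilter extension is modally saturated. -/
theorem ueModel_modally_saturated {W : Type*} (F : VeltmanFrame W)
    (ev : ℕ → Set W) (p : UEWorld W) (hp : InWue F p) (Sig : Set ILFormula)
    (hloc : ∀ L : List ILFormula, (∀ ψ ∈ L, ψ ∈ Sig) →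
      ueForces F ev (ILFormula.dia (conjList L)) p) :
    ∃ q : UEWorld W, InWue F q ∧ Rue F p q ∧ ∀ ψ ∈ Sig, ueForces F ev ψ q := by
  have hdia : ∀ X ∈ conjFilter F ev Sig, Rinv F X ∈ p.1 := fun X ⟨L, hL, hLX⟩ => by
    have hL := (ueForces_iff_mem_interp ev _ p hp).1 (hloc L hL)
    rw [interp_dia] at hL
    exact mem_of_superset hL (rinv_mono hLX)
  obtain ⟨q, hq, hpq, hqSig⟩ := exists_rue_le_of_rinv_mem hp hdia
  exact ⟨q, hq, hpq, fun ψ hψ =>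
    (ueForces_iff_mem_interp ev ψ q hq).2 (hqSig (interp_mem_conjFilter F ev hψ))⟩
end

section
/- Let F = ⟨W, R, {S_w | w ∈ W}⟩ be a Veltman frame, f an ultrafilter on W, and l a collection of subsets of W. If for every finite l' ⊆ l there exists an ultrafilter g on W with f ≺_{l'} g, then there exists an ultrafilter h on W with f ≺_l h. -/
open ILFormula

variable {W : Type*}

/-- label saturation. If every finite sublabel of l admits an
    assuring successor of f, then so does l itself. -/
theorem assur_label_saturation {W : Type*} (F : VeltmanFrame W)
    (f : Ultrafilter W) (l : Set (Set W))
    (h : ∀ l' : Finset (Set W), (↑l' : Set (Set W)) ⊆ l →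
      ∃ g : Ultrafilter W, Assur F (↑l' : Set (Set W)) f g) :
    ∃ h' : Ultrafilter W, Assur F l f h' := by
  classical
  set 𝒮 : Set (Set W) := {B | ∃ A : Set W, ∃ T : Finset (Set W),
    (↑T : Set (Set W)) ⊆ l ∧ Sinv F Aᶜ (⋃ S ∈ T, Sᶜ) ∈ f ∧ B = A ∩ Rinvhat F A} with h𝒮
  have hgen : (Filter.generate 𝒮).NeBot := by
    rw [Filter.generate_neBot_iff]
    intro t ht htfin
    -- choose witnesses
    choose! A T hTl hSinv hB using fun B (hB : B ∈ 𝒮) => hB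
    have hfin : (⋃ B ∈ t, (↑(T B) : Set (Set W))).Finite :=
      htfin.biUnion (fun B _ => (T B).finite_toSet)
    set T' : Finset (Set W) := hfin.toFinset with hT'
    have hT'l : (↑T' : Set (Set W)) ⊆ l := by
      intro S hS
      rw [hT', Set.Finite.coe_toFinset] at hS
      rcases Set.mem_iUnion₂.mp hS with ⟨B, hBt, hSB⟩
      exact hTl B (ht hBt) hSB
    obtain ⟨g, hg⟩ := h T' hT'l
    have hmem : ∀ B ∈ t, B ∈ g := by
      intro B hBt
      have hBS := ht hBt
      have hsub : (↑(T B) : Set (Set W)) ⊆ (↑T' : Set (Set W)) := by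
        intro S hS
        rw [hT', Set.Finite.coe_toFinset]
        exact Set.mem_iUnion₂.mpr ⟨B, hBt, hS⟩
      have := hg (A B) (T B) hsub (hSinv B hBS)
      rw [hB B hBS]
      exact g.toFilter.inter_mem this.1 this.2
    have : ⋂₀ t ∈ g := (Filter.sInter_mem htfin).mpr hmem
    exact Filter.nonempty_of_mem this
  obtain ⟨h', hh'⟩ := Ultrafilter.exists_le (Filter.generate 𝒮)
  refine ⟨h', ?_⟩
  intro A T hTl hSinv
  have : A ∩ Rinvhat F A ∈ h' :=
    hh' (Filter.mem_generate_of_mem ⟨A, T, hTl, hSinv, rfl⟩)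
  exact ⟨h'.toFilter.mem_of_superset this Set.inter_subset_left,
    h'.toFilter.mem_of_superset this Set.inter_subset_right⟩
end
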